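/- Let θ₀ ∈ (0, π) and ε > 0. Let y : [0,1] → ℝ², y_t = (cos(tθ₀), sin(tθ₀)), be the circular arc from A = (1,0) to B = (cos θ₀, sin θ₀), and let x : [0,1] → ℝ² be the Lipschitz, piecewise continuously differentiable path which traverses in order: the arc from A to C = (cos(θ₀/2), sin(θ₀/2)) on [0,1/4], the segment from C to D = (1+ε)(cos(θ₀/2), sin(θ₀/2)) on [1/4,1/2], the segment from D back to C on [1/2,3/4], and the arc from C to B on [3/4,1], each at constant speed. Then x and y have the same signature: for every n ≥ 1, ∫_{0<t_1<⋯<t_n<1} x'(t_1) ⊗ ⋯ ⊗ x'(t_n) dt_1⋯dt_n = ∫_{0<t_1<⋯<t_n<1} y'(t_1) ⊗ ⋯ ⊗ y'(t_n) dt_1⋯dt_n, where the derivatives exist outside finitely many points and the integrals are Lebesgue integrals over the open simplex. -/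

import Mathlib

/-!
The iterated integrals `X_w(t)`, indexed by words `w`, solve Chen's linear system
`X_w' = x'_{last w} · X_{init w}`, and a solution is determined by its value at one time. On each
of the four pieces of the spike path, `x'` is an affine reparametrization of a continuous
velocity, so there `X` is the same reparametrization of the solution driven by that velocity. The
two arcs are pieces of `y` run at double speed. The return leg of the spike is the outgoing leg
run backwards, so `t ↦ X(1 - t)` solves the same system as `X` on `[1/2, 3/4]`: hence
`X(3/4) = X(1/4)`, the spike leaves no trace, and `X(1) = Y(1)`. Fubini identifies the simplex
integrals with these iterated integrals.
-/

open Real MeasureTheory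

/-- The `n`-th iterated integral `∫_{0<t_1<⋯<t_n<1} z'(t_1) ⊗ ⋯ ⊗ z'(t_n) dt ∈ (ℝ^d)^{⊗n}`
of a path `z : ℝ → ℝ^d`, realized concretely in coordinates: `(ℝ^d)^{⊗n}` is identified
with the Euclidean space with basis indexed by words `I : Fin n → Fin d`.  The derivative
`z'` is the almost-everywhere defined derivative and the integral is a Lebesgue integral
over the open simplex. -/
noncomputable def iterIntTensor (d n : ℕ) (z : ℝ → EuclideanSpace ℝ (Fin d)) :
    EuclideanSpace ℝ (Fin n → Fin d) :=
  (WithLp.equiv 2 ((Fin n → Fin d) → ℝ)).symm fun I =>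
    ∫ u in {u : Fin n → ℝ | (∀ k, u k ∈ Set.Ioo (0 : ℝ) 1) ∧ StrictMono u},
      ∏ k, deriv (fun v => z v (I k)) (u k)

/-- The point `(cos θ, sin θ)` on the unit circle. -/
noncomputable def arcPt (θ : ℝ) : EuclideanSpace ℝ (Fin 2) :=
  (WithLp.equiv 2 (Fin 2 → ℝ)).symm ![cos θ, sin θ]

/-- The Lipschitz, piecewise continuously differentiable path which traverses the
unit-circle arc from `A = (1,0)` to `C = (cos(θ₀/2), sin(θ₀/2))` on `[0,1/4]`, the
segment from `C` to `D = (1+ε)C` on `[1/4,1/2]`, the segment from `D` back to `C` on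
`[1/2,3/4]`, and the arc from `C` to `B = (cos θ₀, sin θ₀)` on `[3/4,1]`, each at
constant speed. -/
noncomputable def spikePath (θ₀ ε : ℝ) (t : ℝ) : EuclideanSpace ℝ (Fin 2) :=
  if t ≤ 1 / 4 then arcPt (2 * t * θ₀)
  else if t ≤ 1 / 2 then (1 + 4 * (t - 1 / 4) * ε) • arcPt (θ₀ / 2)
  else if t ≤ 3 / 4 then (1 + 4 * (3 / 4 - t) * ε) • arcPt (θ₀ / 2)
  else arcPt (θ₀ / 2 + (4 * t - 3) * θ₀ / 2)

open Set

section IteratedIntegral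

variable {ι : Type*}

/-- The recursion peels off the last letter of the word, which is integrated against the largest
time of the simplex. -/
noncomputable def iteratedIntegral (f : ι → ℝ → ℝ) : (n : ℕ) → (Fin n → ι) → ℝ → ℝ
  | 0, _, _ => 1
  | n + 1, w, t => ∫ s in (0 : ℝ)..t, f (w (Fin.last n)) s * iteratedIntegral f n (Fin.init w) s

variable {f : ι → ℝ → ℝ}

theorem iteratedIntegral_at_zero_eq (g : ι → ℝ → ℝ) :
    ∀ n w, iteratedIntegral f n w 0 = iteratedIntegral g n w 0
  | 0, _ => rfl
  | _ + 1, _ => intervalIntegral.integral_same.trans intervalIntegral.integral_same.symm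

theorem continuous_iteratedIntegral (hf : ∀ i, LocallyIntegrable (f i)) :
    ∀ n w, Continuous (iteratedIntegral f n w)
  | 0, _ => continuous_const
  | n + 1, _ => intervalIntegral.continuous_primitive (fun _ _ =>
      ((hf _).integrableOn_isCompact isCompact_uIcc).intervalIntegrable.mul_continuousOn
        (continuous_iteratedIntegral hf n _).continuousOn) 0

theorem intervalIntegrable_mul_iteratedIntegral (hf : ∀ i, LocallyIntegrable (f i)) (i : ι)
    {n : ℕ} (w : Fin n → ι) (c d : ℝ) :
    IntervalIntegrable (fun s => f i s * iteratedIntegral f n w s) volume c d :=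
  ((hf i).integrableOn_isCompact isCompact_uIcc).intervalIntegrable.mul_continuousOn
    (continuous_iteratedIntegral hf n w).continuousOn

theorem hasDerivWithinAt_primitive_of_eqOn_Ioo {h ψ : ℝ → ℝ} {a b t : ℝ}
    (hh : ∀ c d, IntervalIntegrable h volume c d) (hψ : Continuous ψ) (heq : EqOn h ψ (Ioo a b))
    (ht : t ∈ Icc a b) :
    HasDerivWithinAt (fun u => ∫ s in (0 : ℝ)..u, h s) (ψ t) (Icc a b) t := by
  have hsplit : EqOn (fun u => ∫ s in (0 : ℝ)..u, h s)
      (fun u => (∫ s in (0 : ℝ)..a, h s) + ∫ s in a..u, ψ s) (Icc a b) := fun u hu => by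
    dsimp only
    rw [← intervalIntegral.integral_add_adjacent_intervals (hh 0 a) (hh a u),
      intervalIntegral.integral_of_le hu.1, intervalIntegral.integral_of_le hu.1,
      integral_Ioc_eq_integral_Ioo, integral_Ioc_eq_integral_Ioo,
      setIntegral_congr_fun measurableSet_Ioo fun s hs => heq ⟨hs.1, hs.2.trans_le hu.2⟩]
  exact ((hψ.integral_hasStrictDerivAt a t).hasDerivAt.const_add _).hasDerivWithinAt.congr_of_mem
    hsplit ht

/-- Chen's equation `dS = S ⊗ dF` for a signature `S`, in the coordinates `X n w` of the words
`w`. -/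
structure SolvesSignatureODE (F : ι → ℝ → ℝ) (a b : ℝ) (X : (n : ℕ) → (Fin n → ι) → ℝ → ℝ) :
    Prop where
  zero : ∀ w, ∀ t ∈ Icc a b, X 0 w t = 1
  hasDerivWithinAt : ∀ n (w : Fin (n + 1) → ι), ∀ t ∈ Icc a b,
    HasDerivWithinAt (X (n + 1) w) (F (w (Fin.last n)) t * X n (Fin.init w) t) (Icc a b) t

namespace SolvesSignatureODE

variable {F : ι → ℝ → ℝ} {a b : ℝ} {X Y : (n : ℕ) → (Fin n → ι) → ℝ → ℝ}

theorem eqOn (hX : SolvesSignatureODE F a b X) (hY : SolvesSignatureODE F a b Y)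
    (ha : ∀ n w, X n w a = Y n w a) : ∀ n w, EqOn (X n w) (Y n w) (Icc a b)
  | 0, w => fun t ht => (hX.zero w t ht).trans (hY.zero w t ht).symm
  | n + 1, w => by
    have ih := eqOn hX hY ha n (Fin.init w)
    have hderiv {Z} (hZ : SolvesSignatureODE F a b Z)
        (hZX : EqOn (Z n (Fin.init w)) (X n (Fin.init w)) (Icc a b)) (t : ℝ) (ht : t ∈ Ico a b) :
        HasDerivWithinAt (Z (n + 1) w) (F (w (Fin.last n)) t * X n (Fin.init w) t) (Ici t) t := by
      rw [← hZX (Ico_subset_Icc_self ht)]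
      exact (hZ.hasDerivWithinAt n w t (Ico_subset_Icc_self ht)).mono_of_mem_nhdsWithin
        (Icc_mem_nhdsGE_of_mem ht)
    exact eq_of_has_deriv_right_eq (hderiv hX (fun _ _ => rfl)) (hderiv hY ih.symm)
      (fun t ht => (hX.hasDerivWithinAt n w t ht).continuousWithinAt)
      (fun t ht => (hY.hasDerivWithinAt n w t ht).continuousWithinAt) (ha _ _)

theorem comp_affine {c d : ℝ} (hX : SolvesSignatureODE F c d X) {α β : ℝ}
    (hmaps : MapsTo (fun t => α * t + β) (Icc a b) (Icc c d)) :
    SolvesSignatureODE (fun i t => α * F i (α * t + β)) a b (fun n w t => X n w (α * t + β)) where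
  zero w t ht := hX.zero w _ (hmaps ht)
  hasDerivWithinAt n w t ht := by
    have haff : HasDerivWithinAt (fun t => α * t + β) α (Icc a b) t := by
      simpa using ((hasDerivAt_id t).const_mul α).add_const β |>.hasDerivWithinAt
    exact ((hX.hasDerivWithinAt n w _ (hmaps ht)).comp t haff hmaps).congr_deriv (by ring)

end SolvesSignatureODE

theorem solvesSignatureODE_iteratedIntegral {F : ι → ℝ → ℝ} {a b : ℝ}
    (hf : ∀ i, LocallyIntegrable (f i)) (hF : ∀ i, Continuous (F i))
    (hfF : ∀ i, EqOn (f i) (F i) (Ioo a b)) : SolvesSignatureODE F a b (iteratedIntegral f) where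
  zero _ _ _ := rfl
  hasDerivWithinAt n _ _ ht :=
    hasDerivWithinAt_primitive_of_eqOn_Ioo
      (intervalIntegrable_mul_iteratedIntegral hf _ _)
      ((hF _).mul (continuous_iteratedIntegral hf n _)) (fun _ hs => congrArg (· * _) (hfF _ hs)) ht

theorem solvesSignatureODE_iteratedIntegral_self {F : ι → ℝ → ℝ} {c d : ℝ}
    (hF : ∀ i, Continuous (F i)) : SolvesSignatureODE F c d (iteratedIntegral F) :=
  solvesSignatureODE_iteratedIntegral (fun i => (hF i).locallyIntegrable) hF fun _ => eqOn_refl _ _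

theorem iteratedIntegral_eqOn_comp_affine {F : ι → ℝ → ℝ} {Y : (n : ℕ) → (Fin n → ι) → ℝ → ℝ}
    {a b c d α β : ℝ} (hf : ∀ i, LocallyIntegrable (f i)) (hF : ∀ i, Continuous (F i))
    (hfF : ∀ i, ∀ s ∈ Ioo a b, f i s = α * F i (α * s + β))
    (hY : SolvesSignatureODE F c d Y) (hmaps : MapsTo (fun t => α * t + β) (Icc a b) (Icc c d))
    (ha : ∀ n w, iteratedIntegral f n w a = Y n w (α * a + β)) (n : ℕ) (w : Fin n → ι) :
    EqOn (iteratedIntegral f n w) (fun t => Y n w (α * t + β)) (Icc a b) :=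
  (solvesSignatureODE_iteratedIntegral hf (fun i => by fun_prop) hfF).eqOn
    (hY.comp_affine hmaps) ha n w

theorem iteratedIntegral_retrace {g : ι → ℝ → ℝ} {a m : ℝ} (ham : a ≤ m)
    (hf : ∀ i, LocallyIntegrable (f i)) (hg : ∀ i, Continuous (g i))
    (hfg : ∀ i, EqOn (f i) (g i) (Ioo a m))
    (hback : ∀ i, ∀ s ∈ Ioo m (2 * m - a), f i s = -g i (2 * m - s)) (n : ℕ) (w : Fin n → ι) :
    iteratedIntegral f n w (2 * m - a) = iteratedIntegral f n w a := by
  have hsymm := iteratedIntegral_eqOn_comp_affine (α := -1) (β := 2 * m) hf hg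
    (fun i s hs => by rw [hback i s hs]; ring_nf) (solvesSignatureODE_iteratedIntegral hf hg hfg)
    (fun t ht => ⟨by linarith [ht.2], by linarith [ht.1]⟩) (fun n w => by ring_nf) n w
    (⟨by linarith, le_rfl⟩ : 2 * m - a ∈ Icc m (2 * m - a))
  simpa using hsymm

def orderedSimplex (n : ℕ) (b : ℝ) : Set (Fin n → ℝ) := {u | (∀ k, u k ∈ Ioo 0 b) ∧ StrictMono u}

theorem measurableSet_orderedSimplex_graph (n : ℕ) :
    MeasurableSet {p : ℝ × (Fin n → ℝ) | p.2 ∈ orderedSimplex n p.1} := by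
  have hset : {p : ℝ × (Fin n → ℝ) | p.2 ∈ orderedSimplex n p.1} =
      (⋂ k, {p | 0 < p.2 k} ∩ {p | p.2 k < p.1}) ∩
        ⋂ i, ⋂ j, ⋂ (_ : i < j), {p | p.2 i < p.2 j} := by
    ext p
    simp [orderedSimplex, StrictMono]
  rw [hset]
  exact (MeasurableSet.iInter fun _ => (measurableSet_lt (by fun_prop) (by fun_prop)).inter
    (measurableSet_lt (by fun_prop) (by fun_prop))).inter <| MeasurableSet.iInter fun _ =>
    .iInter fun _ => .iInter fun _ => measurableSet_lt (by fun_prop) (by fun_prop)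

theorem measurableSet_orderedSimplex (n : ℕ) (b : ℝ) : MeasurableSet (orderedSimplex n b) :=
  measurable_prodMk_left (measurableSet_orderedSimplex_graph n)

theorem mem_orderedSimplex_succ_iff {n : ℕ} {b : ℝ} {u : Fin (n + 1) → ℝ} :
    u ∈ orderedSimplex (n + 1) b ↔
      u (Fin.last n) ∈ Ioo 0 b ∧ Fin.init u ∈ orderedSimplex n (u (Fin.last n)) := by
  constructor
  · rintro ⟨hmem, hmono⟩
    exact ⟨hmem _, fun k => ⟨(hmem _).1, hmono (Fin.castSucc_lt_last k)⟩,
      hmono.comp Fin.strictMono_castSucc⟩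
  · rintro ⟨hlast, hinit, hmono⟩
    refine ⟨Fin.lastCases hlast fun k => ⟨(hinit k).1, (hinit k).2.trans hlast.2⟩,
      fun i j hij => ?_⟩
    induction j using Fin.lastCases with
    | last =>
      induction i using Fin.lastCases with
      | last => exact absurd hij (lt_irrefl _)
      | cast i => exact (hinit i).2
    | cast j =>
      induction i using Fin.lastCases with
      | last => exact absurd hij (Fin.le_last _).not_gt
      | cast i => exact hmono (Fin.castSucc_lt_castSucc_iff.1 hij)

theorem integrableOn_orderedSimplex_prod (hf : ∀ i, LocallyIntegrable (f i)) {n : ℕ}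
    (w : Fin n → ι) (b : ℝ) :
    IntegrableOn (fun u => ∏ k, f (w k) (u k)) (orderedSimplex n b) := by
  have hbox : IntegrableOn (fun u => ∏ k, f (w k) (u k)) (univ.pi fun _ => Ioo 0 b) := by
    rw [IntegrableOn, volume_pi, Measure.restrict_pi_pi]
    exact Integrable.fintype_prod fun k =>
      ((hf (w k)).integrableOn_isCompact isCompact_Icc).mono_set Ioo_subset_Icc_self
  exact hbox.mono_set fun u hu k _ => hu.1 k

theorem setIntegral_orderedSimplex_succ {n : ℕ} {b : ℝ} {G : (Fin (n + 1) → ℝ) → ℝ}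
    (hG : IntegrableOn G (orderedSimplex (n + 1) b)) :
    ∫ u in orderedSimplex (n + 1) b, G u =
      ∫ t in Ioo 0 b, ∫ v in orderedSimplex n t, G (Fin.snoc v t) := by
  set e := MeasurableEquiv.piFinSuccAbove (fun _ : Fin (n + 1) => ℝ) (Fin.last n)
  have he : MeasurePreserving e := volume_preserving_piFinSuccAbove _ _
  have he_apply (u : Fin (n + 1) → ℝ) : e u = (u (Fin.last n), Fin.init u) := by
    simp [e, MeasurableEquiv.piFinSuccAbove_apply, Fin.insertNthEquiv]
  set P := {p : ℝ × (Fin n → ℝ) | p.2 ∈ orderedSimplex n p.1}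
  have hP : MeasurableSet P := measurableSet_orderedSimplex_graph n
  set g : ℝ × (Fin n → ℝ) → ℝ := fun p => G (Fin.snoc p.2 p.1)
  have hpre : e ⁻¹' (Ioo 0 b ×ˢ univ ∩ P) = orderedSimplex (n + 1) b := by
    ext u
    simp [he_apply, P, mem_orderedSimplex_succ_iff]
  have hg : g ∘ e = G := funext fun u => by simp [g, he_apply]
  have hint : IntegrableOn g (Ioo 0 b ×ˢ univ ∩ P) := by
    rwa [← he.integrableOn_comp_preimage e.measurableEmbedding, hg, hpre]
  calc ∫ u in orderedSimplex (n + 1) b, G u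
      = ∫ p in Ioo 0 b ×ˢ univ ∩ P, g p := by
        rw [← he.setIntegral_preimage_emb e.measurableEmbedding, hpre, ← hg]; rfl
    _ = ∫ t in Ioo 0 b, ∫ v, P.indicator g (t, v) := by
        rw [← setIntegral_indicator hP, Measure.volume_eq_prod, setIntegral_prod,
          Measure.restrict_univ]
        rwa [IntegrableOn, integrable_indicator_iff hP, IntegrableOn, Measure.restrict_restrict hP,
          inter_comm, ← Measure.volume_eq_prod]
    _ = ∫ t in Ioo 0 b, ∫ v in orderedSimplex n t, G (Fin.snoc v t) := by
        congr 1 with t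
        exact integral_indicator (measurableSet_orderedSimplex n t)

theorem setIntegral_orderedSimplex_prod_eq_iteratedIntegral (hf : ∀ i, LocallyIntegrable (f i))
    {b : ℝ} (hb : 0 ≤ b) :
    ∀ n (w : Fin n → ι),
      ∫ u in orderedSimplex n b, ∏ k, f (w k) (u k) = iteratedIntegral f n w b := by
  intro n
  induction n generalizing b with
  | zero =>
    intro w
    have huniv : orderedSimplex 0 b = univ :=
      eq_univ_of_forall fun _ => ⟨finZeroElim, fun i => i.elim0⟩
    simp [huniv, iteratedIntegral, Measure.real, volume_pi]
  | succ n ih =>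
    intro w
    rw [setIntegral_orderedSimplex_succ (integrableOn_orderedSimplex_prod hf w b), iteratedIntegral,
      intervalIntegral.integral_of_le hb, integral_Ioc_eq_integral_Ioo]
    refine setIntegral_congr_fun measurableSet_Ioo fun t ht => ?_
    simp only [Fin.prod_univ_castSucc, Fin.snoc_castSucc, Fin.snoc_last]
    rw [integral_mul_const, ih ht.1.le, mul_comm]
    rfl

end IteratedIntegral

theorem iterIntTensor_apply {d n : ℕ} {z : ℝ → EuclideanSpace ℝ (Fin d)}
    (hz : ∀ i, LocallyIntegrable (deriv fun v => z v i)) (I : Fin n → Fin d) :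
    iterIntTensor d n z I = iteratedIntegral (fun i => deriv fun v => z v i) n I 1 :=
  setIntegral_orderedSimplex_prod_eq_iteratedIntegral hz zero_le_one n I

theorem hasDerivAt_arcPt_apply (θ : ℝ) (i : Fin 2) :
    HasDerivAt (fun φ => arcPt φ i) (arcPt (θ + π / 2) i) θ := by
  fin_cases i <;> simp [arcPt, cos_add_pi_div_two, sin_add_pi_div_two]
  · exact hasDerivAt_cos θ
  · exact hasDerivAt_sin θ

theorem abs_arcPt_apply_le_one (θ : ℝ) (i : Fin 2) : |arcPt θ i| ≤ 1 := by
  fin_cases i <;> simp [arcPt, abs_cos_le_one, abs_sin_le_one]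

noncomputable def arcVel (θ₀ : ℝ) (i : Fin 2) : ℝ → ℝ := deriv fun v => arcPt (v * θ₀) i

noncomputable def spikeVel (θ₀ ε : ℝ) (i : Fin 2) : ℝ → ℝ := deriv fun v => spikePath θ₀ ε v i

section SpikePath

variable (θ₀ ε : ℝ) {t : ℝ} (i : Fin 2)

theorem arcVel_apply (t : ℝ) : arcVel θ₀ i t = θ₀ * arcPt (t * θ₀ + π / 2) i := by
  unfold arcVel
  exact ((hasDerivAt_arcPt_apply (t * θ₀) i).comp t (hasDerivAt_mul_const θ₀)).deriv.trans
    (mul_comm _ _)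

theorem continuous_arcVel : Continuous (arcVel θ₀ i) := by
  rw [show arcVel θ₀ i = _ from funext (arcVel_apply θ₀ i)]
  fin_cases i <;> simp [arcPt] <;> fun_prop

theorem spikeVel_of_lt (ht : t < 1 / 4) : spikeVel θ₀ ε i t = 2 * arcVel θ₀ i (2 * t) := by
  have hev : (fun v => spikePath θ₀ ε v i) =ᶠ[nhds t] fun v => arcPt (2 * v * θ₀) i := by
    filter_upwards [Iio_mem_nhds ht] with v hv
    rw [spikePath, if_pos hv.le]
  rw [spikeVel, hev.deriv_eq, deriv_comp_mul_left (f := fun u => arcPt (u * θ₀) i), smul_eq_mul,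
    arcVel]

theorem spikeVel_of_mem_Ioo_out (ht₁ : 1 / 4 < t) (ht₂ : t < 1 / 2) :
    spikeVel θ₀ ε i t = 4 * ε * arcPt (θ₀ / 2) i := by
  have hev : (fun v => spikePath θ₀ ε v i) =ᶠ[nhds t]
      fun v => (1 + 4 * (v - 1 / 4) * ε) * arcPt (θ₀ / 2) i := by
    filter_upwards [Ioo_mem_nhds ht₁ ht₂] with v hv
    rw [spikePath, if_neg (not_le.2 hv.1), if_pos hv.2.le]
    rfl
  rw [spikeVel, hev.deriv_eq]
  simp

theorem spikeVel_of_mem_Ioo_back (ht₁ : 1 / 2 < t) (ht₂ : t < 3 / 4) :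
    spikeVel θ₀ ε i t = -(4 * ε * arcPt (θ₀ / 2) i) := by
  have hev : (fun v => spikePath θ₀ ε v i) =ᶠ[nhds t]
      fun v => (1 + 4 * (3 / 4 - v) * ε) * arcPt (θ₀ / 2) i := by
    filter_upwards [Ioo_mem_nhds ht₁ ht₂] with v hv
    rw [spikePath, if_neg (by linarith [hv.1]), if_neg (not_le.2 hv.1), if_pos hv.2.le]
    rfl
  rw [spikeVel, hev.deriv_eq]
  simp

theorem spikeVel_of_gt (ht : 3 / 4 < t) : spikeVel θ₀ ε i t = 2 * arcVel θ₀ i (2 * t - 1) := by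
  have hev : (fun v => spikePath θ₀ ε v i) =ᶠ[nhds t] fun v => arcPt ((2 * v - 1) * θ₀) i := by
    filter_upwards [Ioi_mem_nhds ht] with v hv
    rw [spikePath, if_neg (by linarith [mem_Ioi.1 hv]), if_neg (by linarith [mem_Ioi.1 hv]),
      if_neg (by linarith [mem_Ioi.1 hv])]
    ring_nf
  rw [spikeVel, hev.deriv_eq, deriv_comp_mul_left (f := fun u => arcPt ((u - 1) * θ₀) i),
    smul_eq_mul, deriv_comp_sub_const (f := fun u => arcPt (u * θ₀) i), arcVel]

theorem norm_spikeVel_le (ht : t ∉ ({1 / 4, 1 / 2, 3 / 4} : Set ℝ)) :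
    ‖spikeVel θ₀ ε i t‖ ≤ 2 * |θ₀| + 4 * |ε| := by
  simp only [mem_insert_iff, mem_singleton_iff, not_or] at ht
  obtain ⟨h₁, h₂, h₃⟩ := ht
  have harc (s : ℝ) : ‖2 * arcVel θ₀ i s‖ ≤ 2 * |θ₀| + 4 * |ε| := by
    rw [arcVel_apply θ₀ i, Real.norm_eq_abs, abs_mul, abs_mul, abs_two]
    have := abs_arcPt_apply_le_one (s * θ₀ + π / 2) i
    nlinarith [abs_nonneg θ₀, abs_nonneg ε, abs_nonneg (arcPt (s * θ₀ + π / 2) i)]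
  have hspike : ‖4 * ε * arcPt (θ₀ / 2) i‖ ≤ 2 * |θ₀| + 4 * |ε| := by
    rw [Real.norm_eq_abs, abs_mul, abs_mul, abs_of_pos four_pos]
    have := abs_arcPt_apply_le_one (θ₀ / 2) i
    nlinarith [abs_nonneg θ₀, abs_nonneg ε, abs_nonneg (arcPt (θ₀ / 2) i)]
  rcases Ne.lt_or_gt h₁ with h₁ | h₁
  · rw [spikeVel_of_lt θ₀ ε i h₁]; exact harc _
  rcases Ne.lt_or_gt h₂ with h₂ | h₂
  · rw [spikeVel_of_mem_Ioo_out θ₀ ε i h₁ h₂]; exact hspike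
  rcases Ne.lt_or_gt h₃ with h₃ | h₃
  · rw [spikeVel_of_mem_Ioo_back θ₀ ε i h₂ h₃, norm_neg]; exact hspike
  · rw [spikeVel_of_gt θ₀ ε i h₃]; exact harc _

theorem locallyIntegrable_spikeVel : LocallyIntegrable (spikeVel θ₀ ε i) :=
  (memLp_top_of_bound (measurable_deriv _).aestronglyMeasurable _
    (measure_eq_zero_iff_ae_notMem.1 ((toFinite _).measure_zero volume) |>.mono
      fun _ => norm_spikeVel_le θ₀ ε i)).locallyIntegrable le_top

theorem iteratedIntegral_spikeVel_quarter (n : ℕ) (w : Fin n → Fin 2) :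
    iteratedIntegral (spikeVel θ₀ ε) n w (1 / 4) = iteratedIntegral (arcVel θ₀) n w (1 / 2) := by
  have h := iteratedIntegral_eqOn_comp_affine (α := 2) (β := 0) (c := 0) (d := 1 / 2)
    (locallyIntegrable_spikeVel θ₀ ε) (continuous_arcVel θ₀)
    (fun i s hs => by simpa using spikeVel_of_lt θ₀ ε i hs.2)
    (solvesSignatureODE_iteratedIntegral_self (continuous_arcVel θ₀))
    (fun t ht => ⟨by linarith [ht.1], by linarith [ht.2]⟩)
    (by simpa using iteratedIntegral_at_zero_eq _) n w
    (right_mem_Icc.2 (by norm_num : (0 : ℝ) ≤ 1 / 4))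
  norm_num at h
  exact h

theorem iteratedIntegral_spikeVel_three_quarters (n : ℕ) (w : Fin n → Fin 2) :
    iteratedIntegral (spikeVel θ₀ ε) n w (3 / 4) =
      iteratedIntegral (spikeVel θ₀ ε) n w (1 / 4) := by
  have h := iteratedIntegral_retrace (a := 1 / 4) (m := 1 / 2)
    (g := fun i _ => 4 * ε * arcPt (θ₀ / 2) i) (by norm_num) (locallyIntegrable_spikeVel θ₀ ε)
    (fun _ => continuous_const) (fun i s hs => spikeVel_of_mem_Ioo_out θ₀ ε i hs.1 hs.2)
    (fun i s hs => spikeVel_of_mem_Ioo_back θ₀ ε i hs.1 (by linarith [hs.2])) n w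
  norm_num at h
  exact h

theorem iteratedIntegral_spikeVel_one (n : ℕ) (w : Fin n → Fin 2) :
    iteratedIntegral (spikeVel θ₀ ε) n w 1 = iteratedIntegral (arcVel θ₀) n w 1 := by
  have h := iteratedIntegral_eqOn_comp_affine (α := 2) (β := -1) (c := 1 / 2) (d := 1)
    (locallyIntegrable_spikeVel θ₀ ε) (continuous_arcVel θ₀)
    (fun i s hs => by simpa [sub_eq_add_neg] using spikeVel_of_gt θ₀ ε i hs.1)
    (solvesSignatureODE_iteratedIntegral_self (continuous_arcVel θ₀))
    (fun t ht => ⟨by linarith [ht.1], by linarith [ht.2]⟩)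
    (fun n w => by norm_num [iteratedIntegral_spikeVel_three_quarters,
      iteratedIntegral_spikeVel_quarter]) n w
    (right_mem_Icc.2 (by norm_num : (3 / 4 : ℝ) ≤ 1))
  norm_num at h
  exact h

end SpikePath

theorem spike_path_same_signature_general (θ₀ ε : ℝ) (n : ℕ) :
    iterIntTensor 2 n (spikePath θ₀ ε) =
      iterIntTensor 2 n (fun t => arcPt (t * θ₀)) := by
  ext I
  rw [iterIntTensor_apply (locallyIntegrable_spikeVel θ₀ ε),
    iterIntTensor_apply fun i => (continuous_arcVel θ₀ i).locallyIntegrable]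
  exact iteratedIntegral_spikeVel_one θ₀ ε n I

/-- The arc-with-spike path `x` and the plain circular arc `y_t = (cos(tθ₀), sin(tθ₀))`
from `A = (1,0)` to `B = (cos θ₀, sin θ₀)` have the same signature: all their iterated
integrals coincide. -/
theorem spike_path_same_signature (θ₀ ε : ℝ) (hθ₀ : θ₀ ∈ Set.Ioo (0 : ℝ) π) (hε : 0 < ε)
    (n : ℕ) (hn : 1 ≤ n) :
    iterIntTensor 2 n (spikePath θ₀ ε) =
      iterIntTensor 2 n (fun t => arcPt (t * θ₀)) :=
  spike_path_same_signature_general θ₀ ε n
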